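/- arXiv:1512.01433 — 3 statements merged into one kernel-verified Lean document; each statement's English description precedes it below -/
import Mathlib

section
/- The Macaulay growth function is monotone: if m ≤ n are positive integers and d ≥ 1, then ((m)_{(d)})^{+1}_{+1} ≤ ((n)_{(d)})^{+1}_{+1}. -/
/-- The list of pairs `(nᵢ, i)` appearing in the `d`-binomial (Macaulay) expansion
of `n`, computed greedily. -/
def binomialExpansion : ℕ → ℕ → List (ℕ × ℕ)
  | _, 0 => []
  | 0, _ + 1 => []
  | n + 1, d + 1 =>
      let a := Nat.findGreatest (fun m => Nat.choose m (d + 1) ≤ n + 1) (n + d + 2)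
      (a, d + 1) :: binomialExpansion (n + 1 - Nat.choose a (d + 1)) d
  termination_by n d => d

/-- `((n)_(d))^{+1}_{+1}` : Macaulay's upper bound for growth from degree `d` to `d+1`. -/
def macaulayBound (n d : ℕ) : ℕ :=
  ((binomialExpansion n d).map fun p => Nat.choose (p.1 + 1) (p.2 + 1)).sum

/-- `((n)_(d))^{-1}_{-1}`. -/
def macaulayLower (n d : ℕ) : ℕ :=
  ((binomialExpansion n d).map fun p => Nat.choose (p.1 - 1) (p.2 - 1)).sum

/-- `((n)_(d))^{-1}_{0}` : the bound appearing in Green's theorem. -/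
def greenBound (n d : ℕ) : ℕ :=
  ((binomialExpansion n d).map fun p => Nat.choose (p.1 - 1) p.2).sum

/-- A finite sequence of nonnegative integers, recorded as a list, is an O-sequence if it
starts with `1` and satisfies Macaulay's growth bound in every degree. -/
def IsOSequence (h : List ℕ) : Prop :=
  h.getD 0 0 = 1 ∧
    ∀ d : ℕ, 1 ≤ d → d + 1 < h.length → h.getD (d + 1) 0 ≤ macaulayBound (h.getD d 0) d

/-- A list is unimodal if it is nondecreasing up to some index and nonincreasing afterwards,
i.e. it never strictly increases after a strict decrease. -/
def IsUnimodal (l : List ℕ) : Prop :=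
  ∃ m : ℕ,
    (∀ i j : ℕ, i ≤ j → j ≤ m → j < l.length → l.getD i 0 ≤ l.getD j 0) ∧
    (∀ i j : ℕ, m ≤ i → i ≤ j → j < l.length → l.getD j 0 ≤ l.getD i 0)

/-- A list is symmetric if it equals its reverse. -/
def IsSymmetricSeq (l : List ℕ) : Prop :=
  ∀ i : ℕ, i < l.length → l.getD i 0 = l.getD (l.length - 1 - i) 0


/-! Write `M_d(N)` for `macaulayBound N d`. The greedy expansion satisfies the recursion
`M_{d+1}(N) = C(a+1, d+2) + M_d(N - C(a, d+1))`, where `a` is the largest integer with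
`C(a, d+1) ≤ N`, and the remainder `N - C(a, d+1)` is less than `C(a, d)`. Induction on `d` first
shows that `N < C(b, d)` forces `M_d(N) < C(b+1, d+1)`, and then that `M_d(N) ≤ M_d(N+1)`: either
`N` and `N + 1` share their leading term and the claim reduces to degree `d - 1`, or
`N + 1 = C(a+1, d+1)` and the bound just proved applies with `b = a + 1`. -/

theorem Nat.findGreatest_le_eq_of_monotone {f : ℕ → ℕ} (hf : Monotone f) {N a b : ℕ}
    (hab : a ≤ b) (h₁ : f a ≤ N) (h₂ : N < f (a + 1)) :
    Nat.findGreatest (fun m => f m ≤ N) b = a :=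
  Nat.findGreatest_eq_iff.2
    ⟨hab, fun _ => h₁, fun _ hn _ hle => (h₂.trans_le (hf hn)).not_ge hle⟩

theorem Nat.lt_choose_add (N : ℕ) {k : ℕ} (hk : 0 < k) : N < Nat.choose (N + k) k := by
  rw [← Nat.choose_symm_add]
  calc N < Nat.choose (N + 1) N := by rw [Nat.choose_succ_self_right]; omega
    _ ≤ Nat.choose (N + k) N := Nat.choose_le_choose _ (by omega)

theorem Nat.exists_choose_le_lt (N : ℕ) {k : ℕ} (hk : 0 < k) :
    ∃ a, Nat.choose a k ≤ N ∧ N < Nat.choose (a + 1) k := by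
  have hex : ∃ a, N < Nat.choose (a + 1) k :=
    ⟨N + k, (Nat.lt_choose_add N hk).trans_le (Nat.choose_le_succ _ _)⟩
  refine ⟨Nat.find hex, ?_, Nat.find_spec hex⟩
  rcases h : Nat.find hex with _ | a
  · simp [Nat.choose_eq_zero_of_lt hk]
  · exact not_lt.1 (Nat.find_min hex (h ▸ Nat.lt_succ_self a))

theorem binomialExpansion_succ_succ {n d a : ℕ} (h₁ : Nat.choose a (d + 1) ≤ n + 1)
    (h₂ : n + 1 < Nat.choose (a + 1) (d + 1)) :
    binomialExpansion (n + 1) (d + 1) =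
      (a, d + 1) :: binomialExpansion (n + 1 - Nat.choose a (d + 1)) d := by
  have ha : a < n + 1 + (d + 1) := by
    by_contra! h
    exact (Nat.lt_choose_add (n + 1) (by omega)).not_ge
      ((Nat.choose_le_choose _ h).trans h₁)
  rw [binomialExpansion,
    Nat.findGreatest_le_eq_of_monotone (Nat.choose_mono _) (by omega) h₁ h₂]

theorem macaulayBound_zero_left (d : ℕ) : macaulayBound 0 d = 0 := by
  cases d <;> simp [macaulayBound, binomialExpansion]

theorem macaulayBound_zero_right (n : ℕ) : macaulayBound n 0 = 0 := by
  cases n <;> simp [macaulayBound, binomialExpansion]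

theorem macaulayBound_succ_eq {N d a : ℕ} (hN : 0 < N) (h₁ : Nat.choose a (d + 1) ≤ N)
    (h₂ : N < Nat.choose (a + 1) (d + 1)) :
    macaulayBound N (d + 1) =
      Nat.choose (a + 1) (d + 2) + macaulayBound (N - Nat.choose a (d + 1)) d := by
  obtain ⟨n, rfl⟩ : ∃ n, N = n + 1 := ⟨N - 1, by omega⟩
  simp [macaulayBound, binomialExpansion_succ_succ h₁ h₂]

theorem macaulayBound_lt_choose {N d b : ℕ} (h : N < Nat.choose b d) :
    macaulayBound N d < Nat.choose (b + 1) (d + 1) := by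
  induction d generalizing N b with
  | zero =>
    rw [macaulayBound_zero_right]
    exact Nat.choose_pos (by omega)
  | succ d ih =>
    have hdb : d + 1 ≤ b := Nat.choose_ne_zero_iff.1 (by omega)
    rcases Nat.eq_zero_or_pos N with rfl | hN
    · rw [macaulayBound_zero_left]
      exact Nat.choose_pos (by omega)
    obtain ⟨a, h₁, h₂⟩ := Nat.exists_choose_le_lt N (k := d + 1) (by omega)
    have hab : a + 1 ≤ b := by
      by_contra! hb
      exact (h.trans_le ((Nat.choose_le_choose _ (by omega)).trans h₁)).false
    have hrem : N - Nat.choose a (d + 1) < Nat.choose a d := by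
      rw [Nat.choose_succ_succ'] at h₂
      omega
    calc macaulayBound N (d + 1)
        = Nat.choose (a + 1) (d + 2) + macaulayBound (N - Nat.choose a (d + 1)) d :=
          macaulayBound_succ_eq hN h₁ h₂
      _ < Nat.choose (a + 1) (d + 2) + Nat.choose (a + 1) (d + 1) :=
          Nat.add_lt_add_left (ih hrem) _
      _ = Nat.choose (a + 2) (d + 2) := by rw [Nat.choose_succ_succ' (a + 1), add_comm]
      _ ≤ Nat.choose (b + 1) (d + 2) := Nat.choose_le_choose _ (by omega)

theorem macaulayBound_le_succ (N d : ℕ) : macaulayBound N d ≤ macaulayBound (N + 1) d := by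
  induction d generalizing N with
  | zero => simp [macaulayBound_zero_right]
  | succ d ih =>
    rcases Nat.eq_zero_or_pos N with rfl | hN
    · simp [macaulayBound_zero_left]
    obtain ⟨a, h₁, h₂⟩ := Nat.exists_choose_le_lt N (k := d + 1) (by omega)
    rcases Nat.lt_or_eq_of_le (show N + 1 ≤ _ from h₂) with hlt | heq
    · rw [macaulayBound_succ_eq hN h₁ h₂, macaulayBound_succ_eq N.succ_pos (by omega) hlt,
        show N + 1 - Nat.choose a (d + 1) = N - Nat.choose a (d + 1) + 1 by omega]
      exact Nat.add_le_add_left (ih _) _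
    · have hda : d + 1 ≤ a + 1 := Nat.choose_ne_zero_iff.1 (by omega)
      have hnext : N + 1 < Nat.choose (a + 2) (d + 1) := by
        rw [Nat.choose_succ_succ' (a + 1), heq]
        have := Nat.choose_pos (show d ≤ a + 1 by omega)
        omega
      calc macaulayBound N (d + 1)
          ≤ Nat.choose (a + 2) (d + 2) := (macaulayBound_lt_choose h₂).le
        _ = macaulayBound (N + 1) (d + 1) := by
          rw [macaulayBound_succ_eq N.succ_pos heq.ge hnext, ← heq, Nat.sub_self,
            macaulayBound_zero_left, add_zero]

theorem macaulayBound_mono_left (d : ℕ) : Monotone fun N => macaulayBound N d :=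
  monotone_nat_of_le_succ fun N => macaulayBound_le_succ N d

theorem macaulayBound_monotone_general (m n d : ℕ) (hmn : m ≤ n) :
    macaulayBound m d ≤ macaulayBound n d :=
  macaulayBound_mono_left d hmn

/-- The Macaulay growth function is monotone: if `m ≤ n` are positive integers and `d ≥ 1`,
then `((m)_{(d)})^{+1}_{+1} ≤ ((n)_{(d)})^{+1}_{+1}`. -/
theorem macaulayBound_monotone (m n d : ℕ) (hm : 0 < m) (hmn : m ≤ n) (hd : 1 ≤ d) :
    macaulayBound m d ≤ macaulayBound n d :=
  macaulayBound_monotone_general m n d hmn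
end

section
/- For all r ≥ 13, the sequence (1, r, r-1, r, 1) is not unimodal but is a symmetric O-sequence. -/
lemma expansion_sum : ∀ d n, 1 ≤ d →
    ((binomialExpansion n d).map fun p => Nat.choose p.1 p.2).sum = n := by
  intro d
  induction d with
  | zero => intro n h; omega
  | succ d ih =>
    intro n _
    match n with
    | 0 => simp [binomialExpansion]
    | m + 1 =>
      rw [binomialExpansion]
      simp only [List.map_cons, List.sum_cons]
      have hle : Nat.choose (Nat.findGreatest (fun x => Nat.choose x (d + 1) ≤ m + 1)
          (m + d + 2)) (d + 1) ≤ m + 1 :=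
        Nat.findGreatest_spec (P := fun x => Nat.choose x (d + 1) ≤ m + 1) (m := 0)
          (Nat.zero_le _) (by simp)
      cases d with
      | zero =>
        have h1 : m + 1 ≤ Nat.findGreatest (fun x => Nat.choose x (0 + 1) ≤ m + 1)
            (m + 0 + 2) := Nat.le_findGreatest (by omega) (by simp)
        simp only [Nat.zero_add, Nat.add_zero, Nat.choose_one_right] at hle h1 ⊢
        have h2 : Nat.findGreatest (fun x => x ≤ m + 1) (m + 2) = m + 1 := by omega
        rw [h2]
        simp [binomialExpansion]
      | succ e =>
        rw [ih _ (by omega)]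
        omega

lemma macaulayBound_ge (n d : ℕ) (hd : 1 ≤ d) : n ≤ macaulayBound n d := by
  rw [macaulayBound]
  nth_rewrite 1 [← expansion_sum d n hd]
  apply List.sum_le_sum
  intro p _
  rw [Nat.choose_succ_succ]
  omega

lemma macaulayBound_two (n : ℕ) (hn : 3 ≤ n) : n + 1 ≤ macaulayBound n 2 := by
  obtain ⟨m, rfl⟩ : ∃ m, n = m + 1 := ⟨n - 1, by omega⟩
  rw [macaulayBound, binomialExpansion]
  simp only [List.map_cons, List.sum_cons]
  set a := Nat.findGreatest (fun x => Nat.choose x (1 + 1) ≤ m + 1) (m + 1 + 2) with ha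
  have hle : Nat.choose a (1 + 1) ≤ m + 1 :=
    Nat.findGreatest_spec (P := fun x => Nat.choose x (1 + 1) ≤ m + 1) (m := 0)
      (Nat.zero_le _) (by simp)
  have ha3 : 3 ≤ a := by
    rw [ha]
    exact Nat.le_findGreatest (by omega) (by norm_num [Nat.choose]; omega)
  have hpos : 0 < Nat.choose a 3 := Nat.choose_pos ha3
  have hsplit : Nat.choose (a + 1) (1 + 1 + 1) = Nat.choose a 2 + Nat.choose a 3 :=
    Nat.choose_succ_succ a 2
  have htail : m + 1 - Nat.choose a (1 + 1) ≤
      ((binomialExpansion (m + 1 - Nat.choose a (1 + 1)) 1).map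
        fun p => Nat.choose (p.1 + 1) (p.2 + 1)).sum :=
    macaulayBound_ge _ 1 le_rfl
  have h2 : Nat.choose a (1 + 1) = Nat.choose a 2 := rfl
  omega

/-- For all `r ≥ 13`, the sequence `(1, r, r-1, r, 1)` is not unimodal but is a symmetric
O-sequence. -/
theorem nonunimodal_symmetric_OSequence_socle_degree_four (r : ℕ) (hr : 13 ≤ r) :
    ¬ IsUnimodal [1, r, r - 1, r, 1] ∧
    IsSymmetricSeq [1, r, r - 1, r, 1] ∧
    IsOSequence [1, r, r - 1, r, 1] := by
  refine ⟨?_, ?_, ?_⟩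
  · rintro ⟨m, h1, h2⟩
    rcases le_or_gt m 2 with hm | hm
    · have := h2 2 3 hm (by omega) (by simp)
      simp [List.getD] at this
      omega
    · have := h1 1 2 (by omega) (by omega) (by simp)
      simp [List.getD] at this
      omega
  · intro i hi
    simp only [List.length_cons, List.length_nil] at hi
    interval_cases i <;> simp [List.getD]
  · refine ⟨rfl, ?_⟩
    intro d hd hlen
    simp only [List.length_cons, List.length_nil] at hlen
    have hub : d ≤ 3 := by omega
    interval_cases d
    · have := macaulayBound_ge r 1 le_rfl
      simp [List.getD]
      omega
    · have := macaulayBound_two (r - 1) (by omega)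
      have h : r - 1 + 1 = r := by omega
      simp [List.getD]
      omega
    · have := macaulayBound_ge r 3 (by omega)
      simp [List.getD]
      omega
end

section
/- The sequence (1, 12, 11, 12, 1) is a symmetric O-sequence that is not unimodal. -/
/-!
The three Macaulay bounds that matter come from the expansions `12 = C(12,1)`,
`11 = C(5,2) + C(1,1)` and `12 = C(5,3) + C(2,2) + C(1,1)`, giving `78 ≥ 11`, `21 ≥ 12` and
`17 ≥ 1`; the dip `12 > 11 < 12` rules out unimodality.
-/

theorem IsSymmetricSeq.of_reverse_eq {l : List ℕ} (h : l.reverse = l) : IsSymmetricSeq l := by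
  intro i hi
  rw [← List.getD_reverse i hi, h]

theorem not_isUnimodal_of_dip {l : List ℕ} {i j k : ℕ} (hij : i < j) (hjk : j < k)
    (hk : k < l.length) (hdown : l.getD j 0 < l.getD i 0) (hup : l.getD j 0 < l.getD k 0) :
    ¬ IsUnimodal l := by
  rintro ⟨m, hinc, hdec⟩
  rcases le_total j m with hjm | hmj
  · exact (hinc i j hij.le hjm (hjk.trans hk)).not_gt hdown
  · exact (hdec j k hmj hjk.le hk).not_gt hup

theorem binomialExpansion_one {n : ℕ} (hn : 0 < n) : binomialExpansion n 1 = [(n, 1)] := by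
  obtain ⟨n, rfl⟩ := Nat.exists_eq_add_of_lt hn
  simp [binomialExpansion]

theorem macaulayBound_one (n : ℕ) : macaulayBound n 1 = (n + 1).choose 2 := by
  rcases n.eq_zero_or_pos with rfl | hn
  · simp [macaulayBound, binomialExpansion]
  · simp [macaulayBound, binomialExpansion_one hn]

theorem binomialExpansion_eleven_two : binomialExpansion 11 2 = [(5, 2), (1, 1)] := by
  simp [binomialExpansion, Nat.findGreatest, Nat.choose]

theorem binomialExpansion_twelve_three :
    binomialExpansion 12 3 = [(5, 3), (2, 2), (1, 1)] := by
  simp [binomialExpansion, Nat.findGreatest, Nat.choose]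

theorem macaulayBound_eleven_two : macaulayBound 11 2 = 21 := by
  rw [macaulayBound, binomialExpansion_eleven_two]
  decide

theorem macaulayBound_twelve_three : macaulayBound 12 3 = 17 := by
  rw [macaulayBound, binomialExpansion_twelve_three]
  decide

/-- The sequence `(1, 12, 11, 12, 1)` is a symmetric O-sequence that is not unimodal. -/
theorem one_twelve_eleven_twelve_one :
    IsSymmetricSeq [1, 12, 11, 12, 1] ∧
    IsOSequence [1, 12, 11, 12, 1] ∧
    ¬ IsUnimodal [1, 12, 11, 12, 1] := by
  refine ⟨.of_reverse_eq rfl, ⟨rfl, fun d _ hlt => ?_⟩, ?_⟩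
  · obtain rfl | rfl | rfl : d = 1 ∨ d = 2 ∨ d = 3 := by
      simp only [List.length_cons, List.length_nil] at hlt
      omega
    · show 11 ≤ macaulayBound 12 1
      rw [macaulayBound_one]
      decide
    · show 12 ≤ macaulayBound 11 2
      rw [macaulayBound_eleven_two]
      decide
    · show 1 ≤ macaulayBound 12 3
      rw [macaulayBound_twelve_three]
      decide
  · apply not_isUnimodal_of_dip (i := 1) (j := 2) (k := 3) <;> decide
end
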